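/- Let (I_k)_{k<ω} be the partition of ℕ into consecutive finite intervals with |I_k| = 2^k (so I_k = [2^k − 1, 2^{k+1} − 1)). Let D be a nonprincipal ultrafilter on ℕ, suppose d is long for k, and let (q_l)_{l<ω} be a sequence of LE-conditions in Q_{d,s,k}. Then there exists an LE-condition q^∞ such that for every LE-condition r with r ≤ q^∞, the set {k ∈ ℕ : there exists an LE-condition r′ with r′ ≤ r and |{l ∈ I_k : r′ ≤ q_l}| ≥ (1 − 1/|d|)·2^k} belongs to D. (Forcing-free form of: Q_{d,s,k} is (D, 1/|d|)-lim-linked, i.e., LE_b has ultrafilter-limits for intervals.) -/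

import Mathlib

open scoped Classical

/-- An LE-condition for the poset `LE_b`: a triple `(d, s, φ)` where `d` is a finite
binary sequence, `s n < b n` for `n < |d|`, `φ n ⊆ {0,…,b n − 1}`, and for some `k`,
`|φ n| ≤ b n · 2^{−n/2^k}` for all `n ≥ |d|`. -/
structure LECond (b : ℕ → ℕ) where
  d : List Bool
  s : ℕ → ℕ
  φ : ℕ → Finset ℕ
  s_lt : ∀ n < d.length, s n < b n
  φ_sub : ∀ n, φ n ⊆ Finset.range (b n)
  bound : ∃ k : ℕ, ∀ n, d.length ≤ n →
    ((φ n).card : ℝ) ≤ (b n : ℝ) * (2 : ℝ) ^ (-(n : ℝ) / (2 : ℝ) ^ k)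

/-- Membership in `Q_k`: the witness `k` works. -/
def LECond.inQ {b : ℕ → ℕ} (p : LECond b) (k : ℕ) : Prop :=
  ∀ n, p.d.length ≤ n →
    ((p.φ n).card : ℝ) ≤ (b n : ℝ) * (2 : ℝ) ^ (-(n : ℝ) / (2 : ℝ) ^ k)

/-- Membership in `Q_{d,s,k}`: in `Q_k` with first two coordinates `d`, `s`. -/
def LECond.inQds {b : ℕ → ℕ} (p : LECond b) (d : List Bool) (s : ℕ → ℕ) (k : ℕ) : Prop :=
  p.d = d ∧ (∀ n < d.length, p.s n = s n) ∧ p.inQ k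

/-- The extension order on LE-conditions: `q ≤ p`. -/
def LECond.le {b : ℕ → ℕ} (q p : LECond b) : Prop :=
  p.d <+: q.d ∧ (∀ n < p.d.length, q.s n = p.s n) ∧ (∀ n, p.φ n ⊆ q.φ n) ∧
  ∀ n, q.d.getD n false = true → ¬ (p.d.getD n false = true) → q.s n ∉ p.φ n

/-- `d` is long for `k`: `|d| ≥ 2` and `2^{−n/2^k} ≤ 1/(n²(n+1)²)` for all `n ≥ |d|`. -/
def LongFor (k : ℕ) (d : List Bool) : Prop :=
  2 ≤ d.length ∧ ∀ n : ℕ, d.length ≤ n →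
    (2 : ℝ) ^ (-(n : ℝ) / (2 : ℝ) ^ k) ≤ 1 / ((n : ℝ) ^ 2 * ((n : ℝ) + 1) ^ 2)

/-!
The limit condition keeps the stem `(d, s)` and puts `i` into `φ^∞(n)` when, for `D`-many `j`,
at least a `1 / (n (n + 1))` fraction of the `q l` with `l ∈ I_j` have `i ∈ φ_l(n)`. Double
counting against `|φ_l(n)| ≤ b(n) 2^{-n/2^k}`, together with the length of `d`, puts `q^∞` in
`Q_{k+1}`. If `r ≤ q^∞`, then at each of the finitely many new positions `n` of `r` we have
`r.s(n) ∉ φ^∞(n)`, so for `D`-many `j` at most a `1 / (n (n + 1))` fraction of `I_j` forbids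
`r.s(n)` at `n`. As `∑_{n ≥ |d|} 1 / (n (n + 1)) = 1 / |d|`, at least `(1 - 1/|d|) 2^j` of the
`q l` with `l ∈ I_j` are compatible with `r`, and finitely many compatible conditions have a
common extension of `r`.
-/

open Finset

lemma List.getD_append_replicate {α : Type*} (L : List α) (x : α) (t n : ℕ) :
    (L ++ List.replicate t x).getD n x = L.getD n x := by
  rcases lt_or_ge n L.length with h | h
  · exact List.getD_append _ _ _ _ h
  · rw [List.getD_append_right _ _ _ _ h, List.getD_eq_default _ _ h]
    simp

lemma List.IsPrefix.getD_eq {α : Type*} {L M : List α} (h : L <+: M) {n : ℕ}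
    (hn : n < L.length) (x : α) : M.getD n x = L.getD n x := by
  obtain ⟨t, rfl⟩ := h
  exact List.getD_append _ _ _ _ hn

lemma List.lt_length_of_getD_eq_true {L : List Bool} {n : ℕ} (h : L.getD n false = true) :
    n < L.length := by
  by_contra hn
  rw [List.getD_eq_default _ _ (not_lt.mp hn)] at h
  exact Bool.false_ne_true h

lemma sum_Ico_one_div_mul_succ {a : ℕ} (ha : 1 ≤ a) {M : ℕ} (hM : a ≤ M) :
    ∑ n ∈ Ico a M, (1 : ℝ) / (n * (n + 1)) = 1 / a - 1 / M := by
  induction M, hM using Nat.le_induction with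
  | base => simp
  | succ M hM ih =>
    have hM0 : (0 : ℝ) < M := by exact_mod_cast ha.trans hM
    rw [sum_Ico_succ_top hM, ih]
    push_cast
    field_simp
    ring

lemma sum_one_div_mul_succ_le {C : Finset ℕ} {a : ℕ} (ha : 1 ≤ a) (hC : ∀ n ∈ C, a ≤ n) :
    ∑ n ∈ C, (1 : ℝ) / (n * (n + 1)) ≤ 1 / a := by
  have hM : a ≤ C.sup id + 1 + a := by omega
  calc ∑ n ∈ C, (1 : ℝ) / (n * (n + 1))
      ≤ ∑ n ∈ Ico a (C.sup id + 1 + a), (1 : ℝ) / (n * (n + 1)) := by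
        refine sum_le_sum_of_subset_of_nonneg (fun n hn => mem_Ico.mpr ⟨hC n hn, ?_⟩)
          fun _ _ _ => by positivity
        have : n ≤ C.sup id := le_sup (f := id) hn
        omega
    _ = 1 / a - 1 / (C.sup id + 1 + a : ℕ) := sum_Ico_one_div_mul_succ ha hM
    _ ≤ 1 / a := sub_le_self _ (by positivity)

lemma Finset.card_le_card_filter_add_sum {α ι : Type*} (T : Finset α) (C : Finset ι)
    (p : α → Prop) (bad : ι → α → Prop) [DecidablePred p] [∀ n, DecidablePred (bad n)]
    (h : ∀ l ∈ T, (∀ n ∈ C, ¬ bad n l) → p l) :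
    #T ≤ #(T.filter p) + ∑ n ∈ C, #(T.filter (bad n)) := by
  have hcover : T ⊆ T.filter p ∪ C.biUnion fun n => T.filter (bad n) := by
    intro l hl
    rcases em (∃ n ∈ C, bad n l) with ⟨n, hn, hbad⟩ | hgood
    · exact mem_union_right _ (mem_biUnion.mpr ⟨n, hn, mem_filter.mpr ⟨hl, hbad⟩⟩)
    · exact mem_union_left _ (mem_filter.mpr ⟨hl, h l hl fun n hn hbad => hgood ⟨n, hn, hbad⟩⟩)
  exact (card_le_card hcover).trans
    ((card_union_le _ _).trans (Nat.add_le_add_left card_biUnion_le _))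

noncomputable def decay (k n : ℕ) : ℝ := (2 : ℝ) ^ (-(n : ℝ) / (2 : ℝ) ^ k)

lemma decay_pos (k n : ℕ) : 0 < decay k n := Real.rpow_pos_of_pos two_pos _

lemma decay_succ_mul_self (k n : ℕ) : decay (k + 1) n * decay (k + 1) n = decay k n := by
  rw [decay, decay, ← Real.rpow_add two_pos, pow_succ]
  congr 1
  field_simp
  ring

lemma decay_mono {k K : ℕ} (h : k ≤ K) (n : ℕ) : decay k n ≤ decay K n := by
  apply Real.rpow_le_rpow_of_exponent_le one_le_two
  rw [neg_div, neg_div, neg_le_neg_iff]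
  exact div_le_div_of_nonneg_left (by positivity) (by positivity)
    (pow_le_pow_right₀ one_le_two h)

lemma decay_le_mul_self {k K : ℕ} (h : k < K) (n : ℕ) : decay k n ≤ decay K n * decay K n := by
  obtain ⟨K, rfl⟩ := Nat.exists_eq_add_of_lt h
  rw [decay_succ_mul_self]
  exact decay_mono (by omega) n

lemma natCast_mul_decay_le_one {K c n : ℕ} (h : 2 ^ K * c ≤ n) : (c : ℝ) * decay K n ≤ 1 := by
  have hexp : -(n : ℝ) / 2 ^ K ≤ -(c : ℝ) := by
    rw [neg_div, neg_le_neg_iff, le_div_iff₀ (by positivity), mul_comm]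
    exact_mod_cast h
  have hdecay : decay K n ≤ ((2 : ℝ) ^ c)⁻¹ := by
    rw [← Real.rpow_natCast, ← Real.rpow_neg zero_le_two]
    exact Real.rpow_le_rpow_of_exponent_le one_le_two hexp
  have hc : (c : ℝ) ≤ 2 ^ c := by exact_mod_cast (Nat.lt_two_pow_self).le
  calc (c : ℝ) * decay K n ≤ 2 ^ c * ((2 : ℝ) ^ c)⁻¹ := by gcongr; exact (decay_pos K n).le
    _ = 1 := mul_inv_cancel₀ (by positivity)

lemma LongFor.mul_decay_succ_le_one {k : ℕ} {d : List Bool} (hd : LongFor k d) {n : ℕ}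
    (hn : d.length ≤ n) : (n : ℝ) * (n + 1) * decay (k + 1) n ≤ 1 := by
  have hn2 : (2 : ℝ) ≤ n := by exact_mod_cast hd.1.trans hn
  have hpos : (0 : ℝ) < n * (n + 1) := by positivity
  have hsq : ((n : ℝ) * (n + 1) * decay (k + 1) n) ^ 2 ≤ 1 := by
    have h := hd.2 n hn
    rw [← decay, ← decay_succ_mul_self, le_div_iff₀ (by positivity)] at h
    linarith
  exact (sq_le_one_iff₀ (mul_nonneg hpos.le (decay_pos _ _).le)).mp hsq

namespace LECond

variable {b : ℕ → ℕ}

/-- Every requirement of `r.le p` except `p.φ ⊆ r.φ`. -/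
def Respects (r p : LECond b) : Prop :=
  p.d <+: r.d ∧ (∀ n < p.d.length, r.s n = p.s n) ∧
  ∀ n, r.d.getD n false = true → ¬ (p.d.getD n false = true) → r.s n ∉ p.φ n

lemma respects_self (r : LECond b) : r.Respects r :=
  ⟨List.prefix_refl _, fun _ _ => rfl, fun _ h h' => absurd h h'⟩

lemma respects_of_le {r p p' : LECond b} (hr : r.le p') (hd : p.d = p'.d)
    (hs : ∀ n < p.d.length, p.s n = p'.s n)
    (hnew : ∀ n, r.d.getD n false = true → ¬ (p.d.getD n false = true) → r.s n ∉ p.φ n) :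
    r.Respects p :=
  ⟨hd ▸ hr.1, fun n hn => (hr.2.1 n (hd ▸ hn)).trans (hs n hn).symm, hnew⟩

lemma exists_card_biUnion_φ_le (P : Finset (LECond b)) :
    ∃ K m, (∀ p ∈ P, p.d.length ≤ m) ∧
      ∀ n, m ≤ n → (#(P.biUnion (·.φ n)) : ℝ) ≤ b n * decay K n := by
  choose k hk using fun p : LECond b => p.bound
  set K := P.sup k + 1
  refine ⟨K, max (P.sup (·.d.length)) (2 ^ K * #P), fun p hp => ?_, fun n hn => ?_⟩
  · exact (le_sup (f := (·.d.length)) hp).trans (le_max_left _ _)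
  have hb : (0 : ℝ) ≤ b n := Nat.cast_nonneg _
  have he := decay_pos K n
  have hφ : ∀ p ∈ P, (#(p.φ n) : ℝ) ≤ b n * (decay K n * decay K n) := fun p hp =>
    (hk p n ((le_sup (f := (·.d.length)) hp).trans ((le_max_left _ _).trans hn))).trans
      (mul_le_mul_of_nonneg_left (decay_le_mul_self (Nat.lt_succ_of_le (le_sup hp)) n) hb)
  have hP : (#P : ℝ) * decay K n ≤ 1 := natCast_mul_decay_le_one ((le_max_right _ _).trans hn)
  calc (#(P.biUnion (·.φ n)) : ℝ) ≤ ∑ p ∈ P, (#(p.φ n) : ℝ) := by exact_mod_cast card_biUnion_le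
    _ ≤ #P * (b n * (decay K n * decay K n)) := by
      simpa using sum_le_sum hφ
    _ = (#P * decay K n) * (b n * decay K n) := by ring
    _ ≤ b n * decay K n := mul_le_of_le_one_left (by positivity) hP

/-- Pad `r.d` with zeros until the union of the `φ`s is small enough, and take that union. -/
lemma exists_le_of_respects (hb : ∀ n, 0 < b n) (r : LECond b) (P : Finset (LECond b))
    (hP : ∀ p ∈ P, r.Respects p) : ∃ r' : LECond b, r'.le r ∧ ∀ p ∈ P, r'.le p := by
  obtain ⟨K, m, hm, hK⟩ := exists_card_biUnion_φ_le (insert r P)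
  have hrm : r.d.length ≤ m := hm r (mem_insert_self r P)
  let r' : LECond b :=
    { d := r.d ++ List.replicate (m - r.d.length) false
      s := fun n => if n < r.d.length then r.s n else 0
      φ := fun n => (insert r P).biUnion (·.φ n)
      s_lt := fun n _ => by
        show (if n < r.d.length then r.s n else 0) < b n
        split_ifs with h
        exacts [r.s_lt n h, hb n]
      φ_sub := fun n => biUnion_subset.mpr fun p _ => p.φ_sub n
      bound := ⟨K, fun n hn => hK n (by simpa [hrm] using hn)⟩ }
  have hle : ∀ p ∈ insert r P, r'.le p := by
    intro p hp
    obtain ⟨hpre, hs, hnew⟩ : r.Respects p := by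
      rcases mem_insert.mp hp with rfl | hp
      exacts [respects_self p, hP p hp]
    refine ⟨hpre.trans (List.prefix_append _ _), fun n hn => ?_,
      fun n => subset_biUnion_of_mem (·.φ n) hp, fun n h h' => ?_⟩
    · show (if n < r.d.length then r.s n else 0) = p.s n
      rw [if_pos (hn.trans_le hpre.length_le), hs n hn]
    · simp only [r', List.getD_append_replicate] at h ⊢
      simpa [List.lt_length_of_getD_eq_true h] using hnew n h h'
  exact ⟨r', hle r (mem_insert_self r P), fun p hp => hle p (mem_insert_of_mem hp)⟩

end LECond

def dyadicInterval (j : ℕ) : Finset ℕ := Ico (2 ^ j - 1) (2 ^ (j + 1) - 1)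

lemma card_dyadicInterval (j : ℕ) : #(dyadicInterval j) = 2 ^ j := by
  have := Nat.one_le_two_pow (n := j)
  rw [dyadicInterval, Nat.card_Ico, pow_succ]
  omega

section Limit

variable {b : ℕ → ℕ} (D : Ultrafilter ℕ) (q : ℕ → LECond b)

def hitCount (n i j : ℕ) : ℕ := #((dyadicInterval j).filter fun l => i ∈ (q l).φ n)

/-- The threshold `1 / (n (n + 1))` is summable to `1 / |d|` over `n ≥ |d|` and, for long `d`,
small enough to keep the limit condition in `Q_{k+1}`. -/
noncomputable def limPhi (n : ℕ) : Finset ℕ :=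
  (range (b n)).filter fun i => {j | (2 : ℝ) ^ j / (n * (n + 1)) ≤ hitCount q n i j} ∈ D

variable {D q} {d : List Bool} {s : ℕ → ℕ} {k : ℕ}

lemma card_limPhi_le (hd : LongFor k d) (hq : ∀ l, (q l).inQds d s k) {n : ℕ}
    (hn : d.length ≤ n) : (#(limPhi D q n) : ℝ) ≤ b n * decay (k + 1) n := by
  set A := limPhi D q n
  set c : ℝ := n * (n + 1)
  have hc : 0 < c := by
    have : (2 : ℝ) ≤ n := by exact_mod_cast hd.1.trans hn
    positivity
  obtain ⟨j, hj⟩ := ((D.eventually_all_finset A).mpr fun i hi => (mem_filter.mp hi).2).exists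
  have hdouble := card_nsmul_le_card_nsmul (R := ℝ) (fun i l => i ∈ (q l).φ n)
    (s := A) (t := dyadicInterval j) (m := 2 ^ j / c) (n := b n * decay k n) (fun i hi => hj i hi)
    fun l _ => by
      refine le_trans ?_ ((hq l).2.2 n (by rw [(hq l).1]; exact hn))
      exact_mod_cast card_le_card fun _ hx => (mem_filter.mp hx).2
  rw [nsmul_eq_mul, nsmul_eq_mul, card_dyadicInterval, mul_div_assoc', div_le_iff₀ hc] at hdouble
  have hA : (#A : ℝ) ≤ c * (b n * decay k n) := by
    push_cast at hdouble
    nlinarith [pow_pos (two_pos : (0 : ℝ) < 2) j]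
  calc (#A : ℝ) ≤ c * (b n * decay k n) := hA
    _ = (c * decay (k + 1) n) * (b n * decay (k + 1) n) := by rw [← decay_succ_mul_self]; ring
    _ ≤ b n * decay (k + 1) n :=
      mul_le_of_le_one_left (by have := decay_pos (k + 1) n; positivity)
        (hd.mul_decay_succ_le_one hn)

lemma exists_limit (hd : LongFor k d) (hq : ∀ l, (q l).inQds d s k) :
    ∃ qinf : LECond b, qinf.d = d ∧ (∀ n < d.length, qinf.s n = s n) ∧ qinf.φ = limPhi D q :=
  ⟨{ d := d
     s := (q 0).s
     φ := limPhi D q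
     s_lt := (hq 0).1 ▸ (q 0).s_lt
     φ_sub := fun _ => filter_subset _ _
     bound := ⟨k + 1, fun _ hn => card_limPhi_le hd hq hn⟩ }, rfl, (hq 0).2.1, rfl⟩

lemma eventually_le_card_respects (hd : LongFor k d) (hq : ∀ l, (q l).inQds d s k)
    {qinf r : LECond b} (hqd : qinf.d = d) (hqs : ∀ n < d.length, qinf.s n = s n)
    (hqφ : qinf.φ = limPhi D q) (hr : r.le qinf) :
    ∀ᶠ j in (D : Filter ℕ), (1 - 1 / (d.length : ℝ)) * 2 ^ j ≤
      #((dyadicInterval j).filter fun l => r.Respects (q l)) := by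
  have hpre : d <+: r.d := hqd ▸ hr.1
  set crit := (range r.d.length).filter
    fun n => r.d.getD n false = true ∧ ¬ d.getD n false = true
  have hcrit : ∀ n ∈ crit, d.length ≤ n := by
    intro n hn
    obtain ⟨-, htrue, hd'⟩ := by simpa only [crit, mem_filter, mem_range] using hn
    exact not_lt.mp fun h => hd' (hpre.getD_eq h false ▸ htrue)
  have hsparse : ∀ n ∈ crit, ∀ᶠ j in (D : Filter ℕ),
      (hitCount q n (r.s n) j : ℝ) ≤ 2 ^ j * (1 / (n * (n + 1))) := by
    intro n hn
    obtain ⟨hlt, htrue, hd'⟩ := by simpa only [crit, mem_filter, mem_range] using hn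
    have hout : r.s n ∉ limPhi D q n := hqφ ▸ hr.2.2.2 n htrue (hqd ▸ hd')
    have hrare := D.compl_mem_iff_notMem.mpr
      fun h => hout (mem_filter.mpr ⟨mem_range.mpr (r.s_lt n hlt), h⟩)
    filter_upwards [hrare] with j hj
    rw [mul_one_div]
    exact (not_le.mp (Set.notMem_ofPred_iff.mp hj)).le
  have hrespects : ∀ l, (∀ n ∈ crit, r.s n ∉ (q l).φ n) → r.Respects (q l) := by
    intro l hl
    refine LECond.respects_of_le hr ((hq l).1.trans hqd.symm)
      (fun n hn => ((hq l).2.1 n ((hq l).1 ▸ hn)).trans (hqs n ((hq l).1 ▸ hn)).symm)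
      fun n htrue hd' => hl n (mem_filter.mpr ⟨mem_range.mpr
        (List.lt_length_of_getD_eq_true htrue), htrue, (hq l).1 ▸ hd'⟩)
  filter_upwards [(D.eventually_all_finset crit).mpr hsparse] with j hj
  have hcount : #(dyadicInterval j) ≤ #((dyadicInterval j).filter fun l => r.Respects (q l)) +
      ∑ n ∈ crit, hitCount q n (r.s n) j :=
    card_le_card_filter_add_sum _ _ _ _ fun l _ => hrespects l
  rw [card_dyadicInterval] at hcount
  have hbad : ∑ n ∈ crit, (hitCount q n (r.s n) j : ℝ) ≤ 2 ^ j * (1 / d.length) :=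
    (sum_le_sum hj).trans <| by
      rw [← mul_sum]
      exact mul_le_mul_of_nonneg_left
        (sum_one_div_mul_succ_le (one_le_two.trans hd.1) hcrit) (by positivity)
  have hcount' : (2 : ℝ) ^ j ≤ #((dyadicInterval j).filter fun l => r.Respects (q l)) +
      ∑ n ∈ crit, (hitCount q n (r.s n) j : ℝ) := by
    exact_mod_cast hcount
  linarith

end Limit

theorem stmt11_general (b : ℕ → ℕ) (hb : ∀ n, 2 ^ n ≤ b n)
    (d : List Bool) (s : ℕ → ℕ) (k : ℕ) (hd : LongFor k d)
    (D : Ultrafilter ℕ)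
    (q : ℕ → LECond b) (hq : ∀ l, (q l).inQds d s k) :
    ∃ qinf : LECond b, ∀ r : LECond b, r.le qinf →
      {j : ℕ | ∃ r' : LECond b, r'.le r ∧
        (1 - 1 / (d.length : ℝ)) * (2 : ℝ) ^ j ≤
          (((Finset.Ico (2 ^ j - 1) (2 ^ (j + 1) - 1)).filter
              fun l => r'.le (q l)).card : ℝ)} ∈ D := by
  obtain ⟨qinf, hqd, hqs, hqφ⟩ := exists_limit (D := D) hd hq
  refine ⟨qinf, fun r hr => ?_⟩
  filter_upwards [eventually_le_card_respects hd hq hqd hqs hqφ hr] with j hj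
  set good := (dyadicInterval j).filter fun l => r.Respects (q l)
  obtain ⟨r', hr'r, hr'q⟩ := LECond.exists_le_of_respects
    (fun n => (Nat.two_pow_pos n).trans_le (hb n)) r (good.image q)
    (forall_mem_image.mpr fun _ hl => (mem_filter.mp hl).2)
  refine ⟨r', hr'r, hj.trans ?_⟩
  exact_mod_cast card_le_card fun l hl =>
    mem_filter.mpr ⟨(mem_filter.mp hl).1, hr'q _ (mem_image_of_mem q hl)⟩

/-- Forcing-free form of: `Q_{d,s,k}` (for long `d`) is `(D, 1/|d|)`-lim-linked, i.e.,
`LE_b` has ultrafilter-limits for the intervals `I_j = [2^j − 1, 2^{j+1} − 1)` (of size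
`2^j`): given `(q l)_{l<ω}` in `Q_{d,s,k}`, there is a limit condition `q^∞` such that
for every extension `r` of `q^∞`, the set of `j` such that some `r′ ≤ r` extends at
least a `(1 − 1/|d|)` fraction of the `q l` for `l ∈ I_j` belongs to `D`. -/
theorem stmt11 (b : ℕ → ℕ) (hb : ∀ n, 2 ^ n ≤ b n)
    (d : List Bool) (s : ℕ → ℕ) (k : ℕ) (hd : LongFor k d)
    (D : Ultrafilter ℕ) (hD : ∀ m : ℕ, D ≠ pure m)
    (q : ℕ → LECond b) (hq : ∀ l, (q l).inQds d s k) :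
    ∃ qinf : LECond b, ∀ r : LECond b, r.le qinf →
      {j : ℕ | ∃ r' : LECond b, r'.le r ∧
        (1 - 1 / (d.length : ℝ)) * (2 : ℝ) ^ j ≤
          (((Finset.Ico (2 ^ j - 1) (2 ^ (j + 1) - 1)).filter
              fun l => r'.le (q l)).card : ℝ)} ∈ D :=
  stmt11_general b hb d s k hd D q hq
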